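/- Let κ ∈ 𝐊 and σ̌ > 0. Then f_{κ,σ̌} is concave on [0,∞), satisfies f_{κ,σ̌}(0) = 0, and is continuously differentiable on [0,∞) with derivative f'_{κ,σ̌}(r) = φ(r)·g(r) for every r ≥ 0 (one-sided at r = 0, where f'_{κ,σ̌}(0) = 1). -/

import Mathlib

open Real MeasureTheory Set Filter

noncomputable section

/-- The class `𝐊` of monotonicity profiles: continuous on `(0,∞)`,
`∫₀¹ r (κ r)⁻ dr < ∞` and `liminf_{r→∞} κ(r) > 0`. -/
def memK (κ : ℝ → ℝ) : Prop :=
  ContinuousOn κ (Set.Ioi 0) ∧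
  MeasureTheory.IntegrableOn (fun r => r * max (-κ r) 0) (Set.Ioc 0 1) ∧
  ∃ ε > 0, ∀ᶠ r in Filter.atTop, ε ≤ κ r

/-- The set defining `R₀ = inf {R ≥ 0 : κ(r) ≥ 0 for all r ≥ R}`. -/
def R0set (κ : ℝ → ℝ) : Set ℝ := {R | 0 ≤ R ∧ ∀ r, 0 < r → R ≤ r → 0 ≤ κ r}

def R0 (κ : ℝ → ℝ) : ℝ := sInf (R0set κ)

/-- The set defining `R₁ = inf {R ≥ R₀ : R(R−R₀)·inf_{r ≥ R} κ(r) ≥ 4σ̌²}`. -/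
def R1set (κ : ℝ → ℝ) (σ : ℝ) : Set ℝ :=
  {R | R0 κ ≤ R ∧ ∀ r, 0 < r → R ≤ r → 4 * σ ^ 2 ≤ R * (R - R0 κ) * κ r}

def R1 (κ : ℝ → ℝ) (σ : ℝ) : ℝ := sInf (R1set κ σ)

/-- `φ(r) = exp(−(1/(2σ̌²)) ∫₀ʳ s (κ s)⁻ ds)`. -/
def phiF (κ : ℝ → ℝ) (σ : ℝ) (r : ℝ) : ℝ :=
  Real.exp (-(1 / (2 * σ ^ 2)) * ∫ s in (0:ℝ)..r, s * max (-κ s) 0)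

/-- `Φ(r) = ∫₀ʳ φ(s) ds`. -/
def PhiF (κ : ℝ → ℝ) (σ : ℝ) (r : ℝ) : ℝ := ∫ s in (0:ℝ)..r, phiF κ σ s

/-- `𝒵 = ∫₀^{R₁} Φ(s)/φ(s) ds`. -/
def Zconst (κ : ℝ → ℝ) (σ : ℝ) : ℝ :=
  ∫ s in (0:ℝ)..(R1 κ σ), PhiF κ σ s / phiF κ σ s

/-- `g(r) = 1 − (∫₀^{min(r,R₁)} Φ(s)/φ(s) ds)/(2𝒵)`. -/
def gF (κ : ℝ → ℝ) (σ : ℝ) (r : ℝ) : ℝ :=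
  1 - (∫ s in (0:ℝ)..(min r (R1 κ σ)), PhiF κ σ s / phiF κ σ s) / (2 * Zconst κ σ)

/-- `f_{κ,σ̌}(r) = ∫₀ʳ φ(s) g(s) ds`. -/
def fF (κ : ℝ → ℝ) (σ : ℝ) (r : ℝ) : ℝ := ∫ s in (0:ℝ)..r, phiF κ σ s * gF κ σ s

/-- `λ_{κ,σ̌} = σ̌²/𝒵`. -/
def lamConst (κ : ℝ → ℝ) (σ : ℝ) : ℝ := σ ^ 2 / Zconst κ σ

/-- `C_{κ,σ̌} = φ(R₀)/2`. -/
def CConst (κ : ℝ → ℝ) (σ : ℝ) : ℝ := phiF κ σ (R0 κ) / 2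


open scoped Topology

/-! `f` is the primitive of `φ g`, so it suffices that `φ g` is continuous and nonincreasing on
`[0, ∞)`. Since `s (κ s)⁻ ≥ 0` is locally integrable on `[0, ∞)`, `φ` is positive, continuous and
nonincreasing. The map `r ↦ ∫₀^{min(r,R₁)} Φ/φ` is continuous, nondecreasing and bounded by `𝒵`,
so `g` is continuous, nonincreasing and takes values in `[1/2, 1]`. -/
section Primitive

variable {f : ℝ → ℝ} {a : ℝ}

lemma continuousOn_Ici_primitive (hf : ∀ b, a ≤ b → IntervalIntegrable f volume a b) :
    ContinuousOn (fun r => ∫ s in a..r, f s) (Ici a) := by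
  intro r hr
  have hIcc : ContinuousOn (fun r => ∫ s in a..r, f s) (Icc a (r + 1)) := by
    simpa [uIcc_of_le (show a ≤ r + 1 by linarith [mem_Ici.mp hr])] using
      intervalIntegral.continuousOn_primitive_interval' (hf (r + 1) (by linarith [mem_Ici.mp hr]))
        left_mem_uIcc
  refine (hIcc r ⟨hr, by linarith⟩).mono_of_mem_nhdsWithin ?_
  rw [← Ici_inter_Iic]
  exact inter_mem_nhdsWithin _ (Iic_mem_nhds (by linarith))

lemma monotoneOn_Ici_primitive (hf : ∀ b, a ≤ b → IntervalIntegrable f volume a b)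
    (hf₀ : ∀ s, a ≤ s → 0 ≤ f s) :
    MonotoneOn (fun r => ∫ s in a..r, f s) (Ici a) := by
  intro r hr t ht hrt
  have hdiff : (∫ s in a..t, f s) - ∫ s in a..r, f s = ∫ s in r..t, f s :=
    intervalIntegral.integral_interval_sub_left (hf t ht) (hf r hr)
  have hnonneg : 0 ≤ ∫ s in r..t, f s :=
    intervalIntegral.integral_nonneg hrt fun s hs => hf₀ s (le_trans hr hs.1)
  dsimp only
  linarith

lemma ContinuousOn.intervalIntegrable_Ici (hf : ContinuousOn f (Ici a)) {b : ℝ} (hb : a ≤ b) :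
    IntervalIntegrable f volume a b :=
  (hf.mono Icc_subset_Ici_self).intervalIntegrable_of_Icc hb

lemma ContinuousOn.hasDerivWithinAt_Ici_primitive (hf : ContinuousOn f (Ici a)) {r : ℝ}
    (hr : a ≤ r) : HasDerivWithinAt (fun r => ∫ s in a..r, f s) (f r) (Ici a) r := by
  rcases hr.eq_or_lt with rfl | hr
  · exact intervalIntegral.integral_hasDerivWithinAt_right (hf.intervalIntegrable_Ici le_rfl)
      ((hf.mono Ioi_subset_Ici_self).stronglyMeasurableAtFilter_nhdsWithin measurableSet_Ioi a)
      ((hf a self_mem_Ici).mono Ioi_subset_Ici_self)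
  · have hnhds : Ici a ∈ 𝓝 r := Ici_mem_nhds hr
    exact (intervalIntegral.integral_hasDerivAt_right (hf.intervalIntegrable_Ici hr.le)
      (hf.stronglyMeasurableAtFilter_nhdsWithin measurableSet_Ici r |>.filter_mono
        (nhdsWithin_eq_nhds.mpr hnhds).ge) (hf.continuousAt hnhds)).hasDerivWithinAt

lemma AntitoneOn.concaveOn_Ici_primitive (hanti : AntitoneOn f (Ici a))
    (hf : ContinuousOn f (Ici a)) : ConcaveOn ℝ (Ici a) (fun r => ∫ s in a..r, f s) := by
  have hderiv : ∀ r, a < r → HasDerivAt (fun r => ∫ s in a..r, f s) (f r) r := fun r hr =>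
    (hf.hasDerivWithinAt_Ici_primitive hr.le).hasDerivAt (Ici_mem_nhds hr)
  refine AntitoneOn.concaveOn_of_deriv (convex_Ici a)
    (fun r hr => (hf.hasDerivWithinAt_Ici_primitive hr).continuousWithinAt) ?_ ?_
  · rw [interior_Ici]
    exact fun r hr => (hderiv r hr).differentiableAt.differentiableWithinAt
  · rw [interior_Ici]
    intro r hr t ht hrt
    rw [(hderiv r hr).deriv, (hderiv t ht).deriv]
    exact hanti (mem_Ici_of_Ioi hr) (mem_Ici_of_Ioi ht) hrt

end Primitive

section Profile

variable {κ : ℝ → ℝ} {σ : ℝ}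

lemma memK.intervalIntegrable_negPart (hκ : memK κ) {b : ℝ} (hb : 0 ≤ b) :
    IntervalIntegrable (fun s => s * max (-κ s) 0) volume 0 b := by
  obtain ⟨hcont, hint, -⟩ := hκ
  have hfar : IntegrableOn (fun s => s * max (-κ s) 0) (Icc 1 (max b 1)) :=
    (continuousOn_id.mul ((continuous_id.max continuous_const).comp_continuousOn hcont.neg)
      |>.mono fun s hs => zero_lt_one.trans_le hs.1).integrableOn_Icc
  rw [intervalIntegrable_iff_integrableOn_Ioc_of_le hb]
  refine ((Ioc_union_Ioc_eq_Ioc zero_le_one (le_max_right b 1)) ▸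
    hint.union (hfar.mono_set Ioc_subset_Icc_self)).mono_set ?_
  exact Ioc_subset_Ioc_right (le_max_left b 1)

lemma phiF_pos (r : ℝ) : 0 < phiF κ σ r := exp_pos _

lemma phiF_zero : phiF κ σ 0 = 1 := by
  simp [phiF]

lemma continuousOn_phiF (hκ : memK κ) : ContinuousOn (phiF κ σ) (Ici 0) :=
  continuous_exp.comp_continuousOn <| continuousOn_const.mul <|
    continuousOn_Ici_primitive fun _ => hκ.intervalIntegrable_negPart

lemma antitoneOn_phiF (hκ : memK κ) : AntitoneOn (phiF κ σ) (Ici 0) := by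
  have hmono := monotoneOn_Ici_primitive (fun _ => hκ.intervalIntegrable_negPart)
    fun s hs => mul_nonneg hs (le_max_right (-κ s) 0)
  intro r hr t ht hrt
  have hcoef : 0 ≤ 1 / (2 * σ ^ 2) := by positivity
  exact exp_le_exp.mpr (by nlinarith [hmono hr ht hrt])

lemma continuousOn_PhiF (hκ : memK κ) : ContinuousOn (PhiF κ σ) (Ici 0) :=
  continuousOn_Ici_primitive fun _ => (continuousOn_phiF hκ).intervalIntegrable_Ici

lemma PhiF_nonneg {r : ℝ} (hr : 0 ≤ r) : 0 ≤ PhiF κ σ r :=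
  intervalIntegral.integral_nonneg hr fun s _ => (phiF_pos s).le

lemma continuousOn_PhiF_div_phiF (hκ : memK κ) :
    ContinuousOn (fun s => PhiF κ σ s / phiF κ σ s) (Ici 0) :=
  (continuousOn_PhiF hκ).div (continuousOn_phiF hκ) fun s _ => (phiF_pos s).ne'

def Zfun (κ : ℝ → ℝ) (σ : ℝ) (r : ℝ) : ℝ := ∫ s in (0:ℝ)..r, PhiF κ σ s / phiF κ σ s

lemma gF_eq_Zfun (r : ℝ) : gF κ σ r = 1 - Zfun κ σ (min r (R1 κ σ)) / (2 * Zconst κ σ) := rfl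

lemma continuousOn_Zfun (hκ : memK κ) : ContinuousOn (Zfun κ σ) (Ici 0) :=
  continuousOn_Ici_primitive fun _ => (continuousOn_PhiF_div_phiF hκ).intervalIntegrable_Ici

lemma monotoneOn_Zfun (hκ : memK κ) : MonotoneOn (Zfun κ σ) (Ici 0) :=
  monotoneOn_Ici_primitive
    (fun _ => (continuousOn_PhiF_div_phiF hκ).intervalIntegrable_Ici)
    fun _ hs => div_nonneg (PhiF_nonneg hs) (phiF_pos _).le

lemma R1_nonneg : 0 ≤ R1 κ σ :=
  Real.sInf_nonneg fun _ hR => (Real.sInf_nonneg fun _ hR₀ => hR₀.1).trans hR.1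

lemma min_R1_mem_Ici {r : ℝ} (hr : 0 ≤ r) : min r (R1 κ σ) ∈ Ici 0 := le_min hr R1_nonneg

lemma Zconst_nonneg : 0 ≤ Zconst κ σ :=
  intervalIntegral.integral_nonneg R1_nonneg fun s hs =>
    div_nonneg (PhiF_nonneg hs.1) (phiF_pos s).le

lemma gF_zero : gF κ σ 0 = 1 := by
  simp [gF_eq_Zfun, min_eq_left R1_nonneg, Zfun]

lemma gF_nonneg (hκ : memK κ) {r : ℝ} (hr : 0 ≤ r) : 0 ≤ gF κ σ r := by
  have hle : Zfun κ σ (min r (R1 κ σ)) ≤ Zconst κ σ :=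
    monotoneOn_Zfun hκ (min_R1_mem_Ici hr) R1_nonneg (min_le_right r _)
  have hhalf : Zfun κ σ (min r (R1 κ σ)) / (2 * Zconst κ σ) ≤ 1 / 2 :=
    calc Zfun κ σ (min r (R1 κ σ)) / (2 * Zconst κ σ)
        ≤ Zconst κ σ / (2 * Zconst κ σ) := by
          gcongr
          linarith [Zconst_nonneg (κ := κ) (σ := σ)]
      -- `𝒵 = 0` is not excluded; then `g ≡ 1` since `x / 0 = 0`.
      _ = Zconst κ σ / Zconst κ σ / 2 := by rw [mul_comm, div_div]
      _ ≤ 1 / 2 := by gcongr; exact div_self_le_one _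
  rw [gF_eq_Zfun]
  linarith

lemma antitoneOn_gF (hκ : memK κ) : AntitoneOn (gF κ σ) (Ici 0) := by
  intro r hr t ht hrt
  have h2Z : 0 ≤ 2 * Zconst κ σ := by linarith [Zconst_nonneg (κ := κ) (σ := σ)]
  simp only [gF_eq_Zfun]
  gcongr
  exact monotoneOn_Zfun hκ (min_R1_mem_Ici hr) (min_R1_mem_Ici ht) (min_le_min_right _ hrt)

lemma continuousOn_gF (hκ : memK κ) : ContinuousOn (gF κ σ) (Ici 0) := by
  simp only [funext gF_eq_Zfun]
  exact continuousOn_const.sub <| ((continuousOn_Zfun hκ).comp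
    (continuous_id.min continuous_const).continuousOn fun _ => min_R1_mem_Ici).div_const _

end Profile

theorem stmt1_general (κ : ℝ → ℝ) (σ : ℝ) (hκ : memK κ) :
    ConcaveOn ℝ (Set.Ici 0) (fF κ σ) ∧
    fF κ σ 0 = 0 ∧
    (∀ r ∈ Set.Ici (0:ℝ),
      HasDerivWithinAt (fF κ σ) (phiF κ σ r * gF κ σ r) (Set.Ici 0) r) ∧
    ContinuousOn (fun r => phiF κ σ r * gF κ σ r) (Set.Ici 0) ∧
    phiF κ σ 0 * gF κ σ 0 = 1 := by
  have hcont : ContinuousOn (fun r => phiF κ σ r * gF κ σ r) (Ici 0) :=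
    (continuousOn_phiF hκ).mul (continuousOn_gF hκ)
  have hanti : AntitoneOn (fun r => phiF κ σ r * gF κ σ r) (Ici 0) :=
    fun r hr t ht hrt => mul_le_mul (antitoneOn_phiF hκ hr ht hrt) (antitoneOn_gF hκ hr ht hrt)
      (gF_nonneg hκ ht) (phiF_pos r).le
  refine ⟨hanti.concaveOn_Ici_primitive hcont, intervalIntegral.integral_same,
    fun r hr => hcont.hasDerivWithinAt_Ici_primitive hr, hcont, ?_⟩
  rw [phiF_zero, gF_zero, one_mul]

/-- `f_{κ,σ̌}` is concave on `[0,∞)`, vanishes at `0`, and is continuously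
differentiable on `[0,∞)` with derivative `φ·g` (one-sided at `0`), where `f'(0) = 1`. -/
theorem stmt1 (κ : ℝ → ℝ) (σ : ℝ) (hκ : memK κ) (hσ : 0 < σ) :
    ConcaveOn ℝ (Set.Ici 0) (fF κ σ) ∧
    fF κ σ 0 = 0 ∧
    (∀ r ∈ Set.Ici (0:ℝ),
      HasDerivWithinAt (fF κ σ) (phiF κ σ r * gF κ σ r) (Set.Ici 0) r) ∧
    ContinuousOn (fun r => phiF κ σ r * gF κ σ r) (Set.Ici 0) ∧
    phiF κ σ 0 * gF κ σ 0 = 1 :=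
  stmt1_general κ σ hκ
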